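/- arXiv:2107.11952 — 4 statements merged into one kernel-verified Lean document; each statement's English description precedes it below -/
import Mathlib

section
/- For all positive integers n and k, the symmetrized poly-Bernoulli polynomials satisfy the recurrence B̂_n^k(x) = (n+1)·B̂_n^{k-1}(x) + x·∑_{j=0}^{n-1} C(n,j)·B̂_j^{k-1}(x) + ∑_{j=1}^{n-1} C(n,j-1)·B̂_j^{k-1}(x), where C(n,j) denotes the binomial coefficient. -/
open Polynomial Finset

/-- Stirling numbers of the second kind. -/
def stirling2 : ℕ → ℕ → ℕ
  | 0, 0 => 1
  | 0, _ + 1 => 0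
  | _ + 1, 0 => 0
  | n + 1, k + 1 => stirling2 n k + (k + 1) * stirling2 n (k + 1)

/-- The rising factorial (x+1)(x+2)⋯(x+j) as a polynomial in ℤ[x]. -/
noncomputable def risingPoly (j : ℕ) : Polynomial ℤ :=
  ∏ i ∈ Finset.range j, (X + C (i + 1 : ℤ))

/-- The symmetrized poly-Bernoulli polynomial B̂ₙᵏ(x). -/
noncomputable def sB (n k : ℕ) : Polynomial ℤ :=
  ∑ j ∈ Finset.range (min n k + 1),
    C (j.factorial : ℤ) * risingPoly j *
      C (stirling2 (n + 1) (j + 1) : ℤ) * C (stirling2 (k + 1) (j + 1) : ℤ)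

lemma stirling2_succ_succ (n k : ℕ) :
    stirling2 (n+1) (k+1) = stirling2 n k + (k+1) * stirling2 n (k+1) := rfl
lemma stirling2_zero_succ (k : ℕ) : stirling2 0 (k+1) = 0 := rfl
lemma stirling2_succ_zero (n : ℕ) : stirling2 (n+1) 0 = 0 := rfl
lemma stirling2_eq_zero : ∀ {n k : ℕ}, n < k → stirling2 n k = 0 := by
  intro n
  induction n with
  | zero => intro k h; cases k with | zero => omega | succ k => rfl
  | succ n ih =>
    intro k h
    cases k with
    | zero => omega
    | succ k =>
      rw [stirling2_succ_succ, ih (by omega), ih (by omega)]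
      simp

lemma sum_choose_stirling2 (n : ℕ) :
    ∀ r, ∑ m ∈ range (n+1), n.choose m * stirling2 m r = stirling2 (n+1) (r+1) := by
  induction n with
  | zero =>
    intro r
    simp [stirling2_succ_succ, stirling2_zero_succ]
  | succ n ih =>
    intro r
    rw [Finset.sum_range_succ']
    simp only [Nat.choose_succ_succ, Nat.choose_zero_right, one_mul, add_mul,
      Nat.succ_eq_add_one]
    rw [Finset.sum_add_distrib]
    have hX : (∑ x ∈ range (n+1), n.choose (x+1) * stirling2 (x+1) r) + stirling2 0 r
        = stirling2 (n+1) (r+1) := by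
      rw [← ih r, Finset.sum_range_succ, Nat.choose_succ_self, zero_mul, add_zero,
        Finset.sum_range_succ' (fun m => n.choose m * stirling2 m r) n]
      simp
    have hY : ∑ x ∈ range (n+1), n.choose x * stirling2 (x+1) r
        = stirling2 (n+1) r + r * stirling2 (n+1) (r+1) := by
      cases r with
      | zero =>
        simp [stirling2_succ_zero]
      | succ r =>
        have hrec : ∀ m : ℕ, n.choose m * stirling2 (m+1) (r+1)
            = n.choose m * stirling2 m r + (r+1) * (n.choose m * stirling2 m (r+1)) := by
          intro m
          rw [stirling2_succ_succ]
          ring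
        simp only [hrec]
        rw [Finset.sum_add_distrib, ← Finset.mul_sum, ih r, ih (r+1), stirling2_succ_succ]
    rw [add_assoc, hX, hY, stirling2_succ_succ (n+1) r]
    ring

lemma lemB (n j : ℕ) :
    ∑ m ∈ range n, n.choose m * stirling2 (m+1) (j+1) = (j+1) * stirling2 (n+1) (j+2) := by
  have hrec : ∀ m : ℕ, n.choose m * stirling2 (m+1) (j+1)
      = n.choose m * stirling2 m j + (j+1) * (n.choose m * stirling2 m (j+1)) := by
    intro m
    rw [stirling2_succ_succ]
    ring
  have h0 : ∑ m ∈ range (n+1), n.choose m * stirling2 (m+1) (j+1)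
      = stirling2 (n+1) (j+1) + (j+1) * stirling2 (n+1) (j+2) := by
    simp only [hrec]
    rw [Finset.sum_add_distrib, ← Finset.mul_sum, sum_choose_stirling2, sum_choose_stirling2]
  rw [Finset.sum_range_succ, Nat.choose_self, one_mul] at h0
  omega

lemma lemB' (n j : ℕ) :
    ∑ m ∈ range n, n.choose m * stirling2 (m+1) j = j * stirling2 (n+1) (j+1) := by
  cases j with
  | zero => simp [stirling2_succ_zero]
  | succ j => exact lemB n j

lemma lemC (n j : ℕ) :
    ∑ m ∈ Finset.Ico 1 (n+1), ((n+1).choose (m-1) : ℤ) * (stirling2 (m+1) (j+1) : ℤ) =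
      ((j:ℤ)+1)^2 * (stirling2 (n+2) (j+2) : ℤ)
        + ((j:ℤ) - ((n:ℤ)+1)) * (stirling2 (n+2) (j+1) : ℤ) := by
  have hre : ∑ m ∈ Finset.Ico 1 (n+1), ((n+1).choose (m-1) : ℤ) * (stirling2 (m+1) (j+1) : ℤ)
      = ∑ t ∈ range n, ((n+1).choose t : ℤ) * (stirling2 (t+2) (j+1) : ℤ) := by
    rw [Finset.sum_Ico_eq_sum_range]
    refine Finset.sum_congr (by congr 1) fun t _ => ?_
    have e1 : 1 + t - 1 = t := by omega
    have e2 : 1 + t + 1 = t + 2 := by omega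
    rw [e1, e2]
  rw [hre]
  have h1 := lemB' (n+1) j
  have h2 := lemB' (n+1) (j+1)
  rw [Finset.sum_range_succ, Nat.choose_succ_self_right] at h1 h2
  have h1' := congrArg (fun x : ℕ => (x : ℤ)) h1
  have h2' := congrArg (fun x : ℕ => (x : ℤ)) h2
  push_cast at h1' h2'
  have e3 : n+1+1 = n+2 := rfl
  rw [e3] at h1' h2'
  rw [show j+1+1 = j+2 from rfl] at h2'
  have hrec : (stirling2 (n+2) (j+1) : ℤ)
      = (stirling2 (n+1) j : ℤ) + ((j:ℤ)+1) * (stirling2 (n+1) (j+1) : ℤ) := by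
    rw [show n+2 = (n+1)+1 from rfl, stirling2_succ_succ]
    push_cast
    ring
  have h3 : ∀ t : ℕ, (stirling2 (t+2) (j+1) : ℤ)
      = (stirling2 (t+1) j : ℤ) + (stirling2 (t+1) (j+1) : ℤ) * ((j:ℤ)+1) := by
    intro t
    rw [show t+2 = (t+1)+1 from rfl, stirling2_succ_succ]
    push_cast
    ring
  simp only [h3]
  have h4 : ∀ t : ℕ, ((n+1).choose t : ℤ) *
        ((stirling2 (t+1) j : ℤ) + (stirling2 (t+1) (j+1) : ℤ) * ((j:ℤ)+1))
      = ((n+1).choose t : ℤ) * (stirling2 (t+1) j : ℤ)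
        + (((n+1).choose t : ℤ) * (stirling2 (t+1) (j+1) : ℤ)) * ((j:ℤ)+1) := fun t => by ring
  simp only [h4]
  rw [Finset.sum_add_distrib, ← Finset.sum_mul]
  linear_combination h1' + ((j:ℤ)+1) * h2' + (j:ℤ) * hrec
lemma sB_eq (n k N : ℕ) (h : n ≤ N) :
    sB n k = ∑ j ∈ range (N+1), C (j.factorial : ℤ) * risingPoly j *
      C (stirling2 (n + 1) (j + 1) : ℤ) * C (stirling2 (k + 1) (j + 1) : ℤ) := by
  rw [sB]
  apply Finset.sum_subset
  · intro x hx
    simp only [Finset.mem_range] at hx ⊢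
    omega
  · intro x hx hnx
    simp only [Finset.mem_range] at hx hnx
    rcases (by omega : n < x ∨ k < x) with h'|h'
    · rw [stirling2_eq_zero (show n+1 < x+1 by omega)]
      simp
    · rw [stirling2_eq_zero (show k+1 < x+1 by omega)]
      simp

theorem sB_recurrence (n k : ℕ) (hn : 0 < n) (hk : 0 < k) :
    sB n k = (n + 1 : ℤ) • sB n (k - 1)
      + X * ∑ j ∈ Finset.range n, C (n.choose j : ℤ) * sB j (k - 1)
      + ∑ j ∈ Finset.Ico 1 n, C (n.choose (j - 1) : ℤ) * sB j (k - 1) := by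
  obtain ⟨k, rfl⟩ : ∃ k', k = k' + 1 := ⟨k - 1, by omega⟩
  obtain ⟨n, rfl⟩ : ∃ n', n = n' + 1 := ⟨n - 1, by omega⟩
  simp only [Nat.add_sub_cancel]
  have e2 : n + 1 + 1 = n + 2 := rfl
  -- split of the Stirling factor in k
  have hsplitC : ∀ j : ℕ, (C (stirling2 (k+1+1) (j+1) : ℤ) : Polynomial ℤ)
      = C (stirling2 (k+1) j : ℤ) + C (stirling2 (k+1) (j+1) : ℤ) * C ((j:ℤ)+1) := by
    intro j
    rw [← map_mul, ← map_add]
    congr 1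
    rw [stirling2_succ_succ]
    push_cast
    ring
  have hP : ∀ j : ℕ, C ((j+1).factorial : ℤ) * risingPoly (j+1)
      = C ((j:ℤ)+1) * (C (j.factorial:ℤ) * risingPoly j) * (X + C ((j:ℤ)+1)) := by
    intro j
    rw [risingPoly, Finset.prod_range_succ, ← risingPoly, Nat.factorial_succ]
    push_cast
    rw [map_mul]
    ring
  -- reindexed first piece of the left-hand side
  have hA : ∑ j ∈ range (n+k+2+1), C (j.factorial:ℤ) * risingPoly j *
        C (stirling2 (n+2) (j+1) : ℤ) * C (stirling2 (k+1) j : ℤ)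
      = ∑ j ∈ range (n+k+2+1), C ((j:ℤ)+1) * (C (j.factorial:ℤ) * risingPoly j) *
          (X + C ((j:ℤ)+1)) * C (stirling2 (n+2) (j+2) : ℤ) * C (stirling2 (k+1) (j+1) : ℤ) := by
    conv_rhs => rw [Finset.sum_range_succ]
    conv_lhs => rw [Finset.sum_range_succ']
    rw [stirling2_eq_zero (show n+2 < n+k+2+2 by omega)]
    simp only [stirling2_succ_zero, Nat.cast_zero, map_zero, mul_zero, zero_mul, add_zero]
    refine Finset.sum_congr rfl fun i _ => ?_
    rw [hP i, show i+1+1 = i+2 from rfl]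
  -- left-hand side as a single big sum
  have hLs : sB (n+1) (k+1) = ∑ j ∈ range (n+k+2+1),
      (C ((j:ℤ)+1) * (C (j.factorial:ℤ) * risingPoly j) * (X + C ((j:ℤ)+1)) *
          C (stirling2 (n+2) (j+2) : ℤ) * C (stirling2 (k+1) (j+1) : ℤ)
        + C (j.factorial:ℤ) * risingPoly j * C (stirling2 (n+2) (j+1) : ℤ) *
          (C (stirling2 (k+1) (j+1) : ℤ) * C ((j:ℤ)+1))) := by
    rw [sB_eq (n+1) (k+1) (n+k+2) (by omega)]
    simp only [e2, hsplitC, mul_add, ← mul_assoc]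
    rw [Finset.sum_add_distrib, hA, ← Finset.sum_add_distrib]
    refine Finset.sum_congr rfl fun j _ => ?_
    ring
  -- middle sum
  have hmid : ∑ j ∈ range (n+1), C (((n+1).choose j : ℕ) : ℤ) * sB j k
      = ∑ j ∈ range (n+k+2+1), C (j.factorial : ℤ) * risingPoly j *
          C (((j:ℤ)+1) * (stirling2 (n+2) (j+2) : ℤ)) * C (stirling2 (k+1) (j+1) : ℤ) := by
    have step1 : ∀ m ∈ range (n+1), C (((n+1).choose m : ℕ) : ℤ) * sB m k
        = ∑ j ∈ range (n+k+2+1), C (((n+1).choose m : ℤ) * (stirling2 (m+1) (j+1) : ℤ)) *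
            (C (j.factorial : ℤ) * risingPoly j * C (stirling2 (k+1) (j+1) : ℤ)) := by
      intro m hm
      simp only [Finset.mem_range] at hm
      rw [sB_eq m k (n+k+2) (by omega), Finset.mul_sum]
      refine Finset.sum_congr rfl fun j _ => ?_
      rw [map_mul]
      ring
    rw [Finset.sum_congr rfl step1, Finset.sum_comm]
    refine Finset.sum_congr rfl fun j _ => ?_
    rw [← Finset.sum_mul, ← map_sum]
    have hb : ∑ m ∈ range (n+1), ((n+1).choose m : ℤ) * (stirling2 (m+1) (j+1) : ℤ)
        = ((j:ℤ)+1) * (stirling2 (n+2) (j+2) : ℤ) := by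
      have h := congrArg (fun x : ℕ => (x : ℤ)) (lemB (n+1) j)
      push_cast at h
      rw [e2, show j+1+1 = j+2 from rfl] at h
      exact h
    rw [hb]
    ring
  -- last sum
  have hico : ∑ m ∈ Finset.Ico 1 (n+1), C (((n+1).choose (m-1) : ℕ) : ℤ) * sB m k
      = ∑ j ∈ range (n+k+2+1), C (j.factorial : ℤ) * risingPoly j *
          C (((j:ℤ)+1)^2 * (stirling2 (n+2) (j+2) : ℤ)
              + ((j:ℤ) - ((n:ℤ)+1)) * (stirling2 (n+2) (j+1) : ℤ)) *
          C (stirling2 (k+1) (j+1) : ℤ) := by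
    have step1 : ∀ m ∈ Finset.Ico 1 (n+1), C (((n+1).choose (m-1) : ℕ) : ℤ) * sB m k
        = ∑ j ∈ range (n+k+2+1), C (((n+1).choose (m-1) : ℤ) * (stirling2 (m+1) (j+1) : ℤ)) *
            (C (j.factorial : ℤ) * risingPoly j * C (stirling2 (k+1) (j+1) : ℤ)) := by
      intro m hm
      simp only [Finset.mem_Ico] at hm
      rw [sB_eq m k (n+k+2) (by omega), Finset.mul_sum]
      refine Finset.sum_congr rfl fun j _ => ?_
      rw [map_mul]
      ring
    rw [Finset.sum_congr rfl step1, Finset.sum_comm]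
    refine Finset.sum_congr rfl fun j _ => ?_
    rw [← Finset.sum_mul, ← map_sum, lemC n j]
    ring
  rw [hLs, sB_eq (n+1) k (n+k+2) (by omega), hmid, hico, e2]
  rw [Finset.smul_sum, Finset.mul_sum, ← Finset.sum_add_distrib, ← Finset.sum_add_distrib]
  refine Finset.sum_congr rfl fun j _ => ?_
  simp only [Polynomial.smul_eq_C_mul]
  push_cast
  simp only [map_add, map_mul, map_sub, map_pow, map_one]
  ring
end

section
/- The number of partial fillings of an n × k rectangular grid with left arrows and down arrows, such that every cell pointed at by an arrow (i.e., every cell strictly left of a left arrow in the same row, or strictly below a down arrow in the same column) is empty, equals B̂_n^k(1) = ∑_{j=0}^{min(n,k)} j! (j+1)! S(n+1,j+1) S(k+1,j+1). -/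
open Polynomial Finset

/-- A partial filling of an `n × k` grid: `some false` is a left arrow `←`,
`some true` is a down arrow `↓`, `none` is an empty cell. Rows are numbered
top to bottom and columns left to right. -/
def IsAltTableau {n k : ℕ} (f : Fin n → Fin k → Option Bool) : Prop :=
  ∀ i j,
    (f i j = some false → ∀ j' : Fin k, j' < j → f i j' = none) ∧
    (f i j = some true → ∀ i' : Fin n, i < i' → f i' j = none)

instance {n k : ℕ} : DecidablePred (IsAltTableau (n := n) (k := k)) := fun _ =>
  inferInstanceAs (Decidable (∀ _ _, _ ∧ _))

/-!
Deleting the top row of an alternative tableau leaves an alternative tableau on the columns that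
carry no `↓` in that row, and the top row may be any row in which nothing stands to the left of a
`←`. Splitting off the last cell shows that there are `(k+1).choose j` such rows of length `k` with
exactly `j` columns free of `↓`, so the numbers `T n k` of tableaux satisfy `T 0 k = 1` and
`T (n+1) k = ∑ j ≤ k, (k+1).choose j * T n j`. The Stirling sum obeys the same recursion because
`∑ m ≤ k, (k+1).choose m * S (m+1) (j+1) = (j+1) * S (k+2) (j+2)`, a consequence of
`∑ m ≤ p, p.choose m * S m q = S (p+1) (q+1)`.
-/

open Nat

section AltRow

variable {k : ℕ}

def IsAltRow (g : Fin k → Option Bool) : Prop :=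
  ∀ j, g j = some false → ∀ j' < j, g j' = none

instance : DecidablePred (IsAltRow (k := k)) := fun _ =>
  inferInstanceAs (Decidable (∀ _, _ → ∀ _, _))

def freeCols (g : Fin k → Option Bool) : Finset (Fin k) :=
  {j | g j ≠ some true}

theorem isAltRow_snoc_iff (g : Fin k → Option Bool) (c : Option Bool) :
    IsAltRow (Fin.snoc g c : Fin (k + 1) → Option Bool)
      ↔ IsAltRow g ∧ (c = some false → ∀ j, g j = none) := by
  simp only [IsAltRow, Fin.forall_fin_succ', Fin.snoc_castSucc, Fin.snoc_last,
    Fin.castSucc_lt_castSucc_iff, Fin.castSucc_lt_last, not_lt.2 (Fin.le_last _), false_imp_iff,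
    true_imp_iff, and_true]

theorem card_freeCols_snoc (g : Fin k → Option Bool) (c : Option Bool) :
    #(freeCols (Fin.snoc g c : Fin (k + 1) → Option Bool))
      = #(freeCols g) + if c = some true then 0 else 1 := by
  simp only [freeCols, card_filter, Fin.sum_univ_castSucc, Fin.snoc_castSucc, Fin.snoc_last]
  split_ifs <;> simp_all

theorem sum_range_succ_choose_nsmul {M : Type*} [AddCommMonoid M] (F : ℕ → M) (k : ℕ) :
    ∑ j ∈ range (k + 1), (k + 1).choose j • F j
      = F k + ∑ j ∈ range k, k.choose j • F (j + 1) + ∑ j ∈ range k, k.choose j • F j := by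
  have h := (sum_range_succ (fun j => k.choose j • F j) k).symm.trans (sum_range_succ' _ k)
  simp only [choose_self, choose_zero_right, one_smul] at h
  rw [sum_range_succ', choose_zero_right, one_smul]
  simp only [choose_succ_succ', add_smul, sum_add_distrib]
  rw [add_assoc, ← h]
  abel

theorem sum_altRow_freeCols {M : Type*} [AddCommMonoid M] (F : ℕ → M) (k : ℕ) :
    ∑ g : Fin k → Option Bool with IsAltRow g, F #(freeCols g)
      = ∑ j ∈ range (k + 1), (k + 1).choose j • F j := by
  induction k generalizing F with
  | zero => simp [IsAltRow, freeCols]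
  | succ k ih =>
    rw [sum_filter, ← (Fin.snocEquiv fun _ => Option Bool).sum_comp, Fintype.sum_prod_type,
      Fintype.sum_option, Fintype.sum_bool]
    have hsnoc : ∀ c (g : Fin k → Option Bool),
        (Fin.snocEquiv fun _ => Option Bool) (c, g) = Fin.snoc g c := fun _ _ => rfl
    -- a `←` in the last cell forces the rest of the row to be empty
    have hempty : ∀ g : Fin k → Option Bool, (IsAltRow g ∧ ∀ j, g j = none) ↔ g = fun _ => none :=
      fun g => ⟨fun h => funext h.2, by rintro rfl; exact ⟨fun _ h => (nomatch h), fun _ => rfl⟩⟩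
    simp only [hsnoc, isAltRow_snoc_iff, card_freeCols_snoc, hempty, reduceCtorEq,
      IsEmpty.forall_iff, and_true, ↓reduceIte, Option.some.injEq, Bool.true_eq_false,
      Bool.false_eq_true, add_zero, forall_const, Fintype.sum_ite_eq']
    have hnone : #(freeCols fun _ : Fin k => none) = k := by simp [freeCols]
    rw [← sum_filter, ← sum_filter, ih, ih fun j => F (j + 1), hnone,
      sum_range_succ_choose_nsmul F (k + 1)]
    abel

end AltRow

section AltTableau

variable {n k m : ℕ}

theorem isAltTableau_cons_iff (g : Fin k → Option Bool) (t : Fin n → Fin k → Option Bool) :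
    IsAltTableau (Fin.cons g t : Fin (n + 1) → Fin k → Option Bool) ↔
      IsAltRow g ∧ IsAltTableau t ∧ ∀ j, g j = some true → ∀ i, t i j = none := by
  simp only [IsAltTableau, IsAltRow, Fin.forall_fin_succ, Fin.cons_zero, Fin.cons_succ,
    Fin.succ_lt_succ_iff, Fin.succ_pos, forall_const, forall_and]
  tauto

theorem isAltTableau_comp_iff (e : Fin m ↪o Fin k) {t : Fin n → Fin k → Option Bool}
    (ht : ∀ j ∉ Set.range e, ∀ i, t i j = none) :
    IsAltTableau (fun i j => t i (e j)) ↔ IsAltTableau t := by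
  refine ⟨fun hs i j => ?_, fun ht' i j =>
    ⟨fun h j' hj' => (ht' i (e j)).1 h _ (e.lt_iff_lt.2 hj'), (ht' i (e j)).2⟩⟩
  by_cases hj : j ∈ Set.range e
  · obtain ⟨b, rfl⟩ := hj
    refine ⟨fun h j' hj' => ?_, (hs i b).2⟩
    by_cases hj' : j' ∈ Set.range e
    · obtain ⟨a, rfl⟩ := hj'
      exact (hs i b).1 h a (e.lt_iff_lt.1 hj')
    · exact ht j' hj' i
  · simp [ht j hj i]

noncomputable def altTableauRestrictEquiv (e : Fin m ↪o Fin k) :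
    {t : Fin n → Fin k → Option Bool // IsAltTableau t ∧ ∀ j ∉ Set.range e, ∀ i, t i j = none}
      ≃ {s : Fin n → Fin m → Option Bool // IsAltTableau s} where
  toFun t := ⟨fun i j => t.1 i (e j), (isAltTableau_comp_iff e t.2.2).2 t.2.1⟩
  invFun s :=
    have h0 : ∀ j ∉ Set.range e, ∀ i, Function.extend e (s.1 i) (fun _ => none) j = none :=
      fun j hj i => Function.extend_apply' _ _ _ (Set.mem_range.not.1 hj)
    ⟨fun i => Function.extend e (s.1 i) fun _ => none,
      (isAltTableau_comp_iff e h0).1 (by simpa only [e.injective.extend_apply] using s.2), h0⟩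
  left_inv t := Subtype.ext <| funext₂ fun i j => by
    dsimp only
    by_cases hj : j ∈ Set.range e
    · obtain ⟨a, rfl⟩ := hj
      exact e.injective.extend_apply _ _ a
    · rw [Function.extend_apply' _ _ _ (Set.mem_range.not.1 hj), t.2.2 j hj i]
  right_inv s := Subtype.ext <| funext₂ fun i j => by
    dsimp only
    exact e.injective.extend_apply _ _ j

theorem card_altTableau_cons {g : Fin k → Option Bool} (hg : IsAltRow g) :
    Fintype.card {t : Fin n → Fin k → Option Bool // IsAltTableau (Fin.cons g t)}
      = Fintype.card {s : Fin n → Fin #(freeCols g) → Option Bool // IsAltTableau s} := by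
  refine Fintype.card_congr ((Equiv.subtypeEquivRight fun t => ?_).trans
    (altTableauRestrictEquiv ((freeCols g).orderEmbOfFin rfl)))
  rw [isAltTableau_cons_iff, range_orderEmbOfFin]
  simp [freeCols, hg]

theorem card_altTableau_succ (n k : ℕ) :
    Fintype.card {f : Fin (n + 1) → Fin k → Option Bool // IsAltTableau f}
      = ∑ g : Fin k → Option Bool with IsAltRow g,
          Fintype.card {s : Fin n → Fin #(freeCols g) → Option Bool // IsAltTableau s} := by
  rw [Fintype.card_congr (((Fin.consEquiv fun _ => Fin k → Option Bool).subtypeEquiv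
      fun _ => Iff.rfl).symm.trans
    (Equiv.subtypeProdEquivSigmaSubtype fun g t => IsAltTableau (Fin.cons g t))),
    Fintype.card_sigma, sum_filter]
  refine sum_congr rfl fun g _ => ?_
  split_ifs with hg
  · exact card_altTableau_cons hg
  · exact Fintype.card_eq_zero_iff.2 ⟨fun t => hg ((isAltTableau_cons_iff g t.1).1 t.2).1⟩

theorem stirling2_eq_stirlingSecond : stirling2 = stirlingSecond := by
  funext n k
  induction n generalizing k with
  | zero => cases k <;> rfl
  | succ n ih =>
    cases k with
    | zero => rfl
    | succ k => rw [stirling2, stirlingSecond_succ_succ, ih, ih, add_comm]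

namespace Nat

theorem sum_range_choose_mul_stirlingSecond (p q : ℕ) :
    ∑ m ∈ range (p + 1), p.choose m * stirlingSecond m q = stirlingSecond (p + 1) (q + 1) := by
  induction p generalizing q with
  | zero => simp [stirlingSecond_succ_succ]
  | succ p ih =>
    have h := sum_choose_succ_nsmul (fun m _ => stirlingSecond m q) p
    simp only [smul_eq_mul] at h
    rw [h, ih]
    cases q with
    | zero => simp [stirlingSecond_one_right]
    | succ q =>
      rw [sum_congr rfl fun m _ => by rw [stirlingSecond_succ_succ m q],
        stirlingSecond_succ_succ (p + 1)]
      simp only [mul_add, sum_add_distrib, mul_left_comm _ (q + 1), ← mul_sum, ih]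
      ring

theorem sum_range_choose_mul_stirlingSecond_succ (k j : ℕ) :
    ∑ m ∈ range (k + 1), (k + 1).choose m * stirlingSecond (m + 1) (j + 1)
      = (j + 1) * stirlingSecond (k + 2) (j + 2) := by
  have h : ∑ m ∈ range (k + 2), (k + 1).choose m * stirlingSecond (m + 1) (j + 1)
      = (j + 1) * stirlingSecond (k + 2) (j + 2) + stirlingSecond (k + 2) (j + 1) := by
    simp only [stirlingSecond_succ_succ _ j, mul_add, sum_add_distrib, mul_left_comm _ (j + 1),
      ← mul_sum, sum_range_choose_mul_stirlingSecond]
  rwa [sum_range_succ, choose_self, one_mul, add_left_inj] at h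

end Nat

/-- `B̂ₙᵏ(1) = (sB n k).eval 1`, since `risingPoly j` takes the value `(j + 1)!` at `1`. -/
def stirlingSum (n k : ℕ) : ℕ :=
  ∑ j ∈ range (min n k + 1),
    j ! * (j + 1)! * stirlingSecond (n + 1) (j + 1) * stirlingSecond (k + 1) (j + 1)

theorem stirlingSum_eq_sum_range {n k N : ℕ} (hN : min n k + 1 ≤ N) :
    stirlingSum n k = ∑ j ∈ range N,
      j ! * (j + 1)! * stirlingSecond (n + 1) (j + 1) * stirlingSecond (k + 1) (j + 1) := by
  refine (eventually_constant_sum (fun j hj => ?_) hN).symm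
  rcases min_lt_iff.1 (Nat.lt_of_succ_le hj) with h | h <;>
    simp [stirlingSecond_eq_zero_of_lt (Nat.succ_lt_succ h)]

theorem stirlingSum_zero_left (k : ℕ) : stirlingSum 0 k = 1 := by
  simp [stirlingSum, stirlingSecond_one_right]

theorem sum_range_choose_mul_stirlingSum (n k : ℕ) :
    ∑ m ∈ range (k + 1), (k + 1).choose m * stirlingSum n m
      = ∑ j ∈ range (k + 1), j ! * (j + 1)! * stirlingSecond (n + 1) (j + 1)
          * ((j + 1) * stirlingSecond (k + 2) (j + 2)) := by
  calc ∑ m ∈ range (k + 1), (k + 1).choose m * stirlingSum n m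
      = ∑ m ∈ range (k + 1), ∑ j ∈ range (k + 1), j ! * (j + 1)! * stirlingSecond (n + 1) (j + 1)
          * ((k + 1).choose m * stirlingSecond (m + 1) (j + 1)) := by
        refine sum_congr rfl fun m hm => ?_
        rw [stirlingSum_eq_sum_range (N := k + 1) (by grind), mul_sum]
        exact sum_congr rfl fun j _ => by ring
    _ = _ := by
        rw [sum_comm]
        simp only [← mul_sum, sum_range_choose_mul_stirlingSecond_succ]

theorem stirlingSum_succ_left (n k : ℕ) :
    stirlingSum (n + 1) k = ∑ m ∈ range (k + 1), (k + 1).choose m * stirlingSum n m := by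
  rw [sum_range_choose_mul_stirlingSum, stirlingSum_eq_sum_range (N := k + 2) (by omega)]
  have hsplit : ∀ j,
      j ! * (j + 1)! * stirlingSecond (n + 2) (j + 1) * stirlingSecond (k + 1) (j + 1)
        = j ! * (j + 1)! * (j + 1) * stirlingSecond (n + 1) (j + 1) * stirlingSecond (k + 1) (j + 1)
          + j ! * (j + 1)! * stirlingSecond (n + 1) j * stirlingSecond (k + 1) (j + 1) :=
    fun j => by rw [stirlingSecond_succ_succ]; ring
  -- split off the two boundary terms, which vanish: `S (k + 1) (k + 2) = 0` and `S (n + 1) 0 = 0`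
  rw [sum_congr rfl fun j _ => hsplit j, sum_add_distrib, sum_range_succ,
    sum_range_succ' (fun j =>
      j ! * (j + 1)! * stirlingSecond (n + 1) j * stirlingSecond (k + 1) (j + 1)),
    stirlingSecond_eq_zero_of_lt (lt_add_one (k + 1)), stirlingSecond_succ_zero]
  simp only [mul_zero, zero_mul, add_zero, ← sum_add_distrib]
  refine sum_congr rfl fun j _ => ?_
  rw [stirlingSecond_succ_succ (k + 1), factorial_succ (j + 1), factorial_succ j]
  ring

theorem card_altTableau (n k : ℕ) :
    Fintype.card {f : Fin n → Fin k → Option Bool // IsAltTableau f} = stirlingSum n k := by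
  induction n generalizing k with
  | zero =>
    rw [stirlingSum_zero_left, Fintype.card_eq_one_iff]
    exact ⟨⟨finZeroElim, fun i => i.elim0⟩, fun f => Subtype.ext (funext fun i => i.elim0)⟩
  | succ n ih =>
    simp only [card_altTableau_succ, ih, sum_altRow_freeCols, smul_eq_mul, stirlingSum_succ_left]

theorem altTableau_count (n k : ℕ) :
    Fintype.card {f : Fin n → Fin k → Option Bool // IsAltTableau f}
      = ∑ j ∈ Finset.range (min n k + 1),
          j.factorial * (j + 1).factorial *
            stirling2 (n + 1) (j + 1) * stirling2 (k + 1) (j + 1) := by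
  rw [card_altTableau, stirling2_eq_stirlingSecond]
  rfl
end AltTableau
end

section
/- The map sending a packed alternative tableau of size n × k to the tableau obtained by deleting its bottom row and leftmost column is a bijection onto the set of alternative tableaux of rectangular shape n × k; in particular, the two sets have equal cardinality. -/
open Polynomial Finset

/-- A packed alternative tableau of size n × k: an (n+1) × (k+1) alternative
tableau in which each row except the bottom row (index n) contains exactly one ←,
each column except the leftmost (index 0) contains exactly one ↓, the bottom row
contains no ←, and the leftmost column contains no ↓. -/
def IsPackedAltTableau {n k : ℕ} (g : Fin (n + 1) → Fin (k + 1) → Option Bool) : Prop :=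
  IsAltTableau g ∧
  (∀ i : Fin (n + 1), (i : ℕ) < n →
    (Finset.univ.filter fun j => g i j = some false).card = 1) ∧
  (∀ j : Fin (k + 1), 0 < (j : ℕ) →
    (Finset.univ.filter fun i => g i j = some true).card = 1) ∧
  (∀ j : Fin (k + 1), g (Fin.last n) j ≠ some false) ∧
  (∀ i : Fin (n + 1), g i 0 ≠ some true)

/-- Deleting the bottom row and the leftmost column. -/
def deleteBorder {n k : ℕ} (g : Fin (n + 1) → Fin (k + 1) → Option Bool) :
    Fin n → Fin k → Option Bool :=
  fun i j => g i.castSucc j.succ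


theorem delete_alt {n k : ℕ} {g : Fin (n+1) → Fin (k+1) → Option Bool}
    (hg : IsAltTableau g) : IsAltTableau (deleteBorder g) := by
  intro i j
  constructor
  · intro h j' hj'
    exact (hg i.castSucc j.succ).1 h j'.succ (by simpa using hj')
  · intro h i' hi'
    exact (hg i.castSucc j.succ).2 h i'.castSucc (by simpa using hi')

def extendBorder {n k : ℕ} (f : Fin n → Fin k → Option Bool) :
    Fin (n + 1) → Fin (k + 1) → Option Bool :=
  fun i j =>
    Fin.lastCases
      (Fin.cases none
        (fun j' => if ∀ i', f i' j' ≠ some true then some true else none) j)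
      (fun i' =>
        Fin.cases (if ∀ j', f i' j' ≠ some false then some false else none)
          (fun j' => f i' j') j) i

@[simp] theorem extend_cs_succ {n k : ℕ} (f : Fin n → Fin k → Option Bool)
    (i : Fin n) (j : Fin k) : extendBorder f i.castSucc j.succ = f i j := by
  simp [extendBorder]

@[simp] theorem extend_cs_zero {n k : ℕ} (f : Fin n → Fin k → Option Bool)
    (i : Fin n) : extendBorder f i.castSucc 0 =
      (if ∀ j', f i j' ≠ some false then some false else none) := by
  simp [extendBorder]

@[simp] theorem extend_last_succ {n k : ℕ} (f : Fin n → Fin k → Option Bool)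
    (j : Fin k) : extendBorder f (Fin.last n) j.succ =
      (if ∀ i', f i' j ≠ some true then some true else none) := by
  simp [extendBorder]

@[simp] theorem extend_last_zero {n k : ℕ} (f : Fin n → Fin k → Option Bool) :
    extendBorder f (Fin.last n) 0 = none := by
  simp [extendBorder]

theorem row_unique {n k : ℕ} {f : Fin n → Fin k → Option Bool} (hf : IsAltTableau f)
    {i : Fin n} {j j' : Fin k} (h : f i j = some false) (h' : f i j' = some false) :
    j = j' := by
  rcases lt_trichotomy j j' with hlt | he | hgt
  · exact absurd ((hf i j').1 h' j hlt) (by simp [h])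
  · exact he
  · exact absurd ((hf i j).1 h j' hgt) (by simp [h'])

theorem col_unique {n k : ℕ} {f : Fin n → Fin k → Option Bool} (hf : IsAltTableau f)
    {i i' : Fin n} {j : Fin k} (h : f i j = some true) (h' : f i' j = some true) :
    i = i' := by
  rcases lt_trichotomy i i' with hlt | he | hgt
  · exact absurd ((hf i j).2 h i' hlt) (by simp [h'])
  · exact he
  · exact absurd ((hf i' j).2 h' i hgt) (by simp [h])

theorem extend_alt {n k : ℕ} {f : Fin n → Fin k → Option Bool} (hf : IsAltTableau f) :
    IsAltTableau (extendBorder f) := by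
  intro i j
  induction i using Fin.lastCases with
  | last =>
    induction j using Fin.cases with
    | zero => simp
    | succ j =>
      constructor
      · intro h
        rw [extend_last_succ] at h
        split at h <;> simp_all
      · intro _ i' hi'
        exact absurd hi' (Fin.le_last i').not_gt
  | cast i =>
    induction j using Fin.cases with
    | zero =>
      constructor
      · intro _ j' hj'
        exact absurd hj' (by simp)
      · intro h
        rw [extend_cs_zero] at h
        split at h <;> simp_all
    | succ j =>
      rw [extend_cs_succ]
      constructor
      · intro h j' hj'
        induction j' using Fin.cases with
        | zero =>
          rw [extend_cs_zero, if_neg]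
          push_neg
          exact ⟨j, h⟩
        | succ j' =>
          rw [extend_cs_succ]
          exact (hf i j).1 h j' (by simpa using hj')
      · intro h i' hi'
        induction i' using Fin.lastCases with
        | last =>
          rw [extend_last_succ, if_neg]
          push_neg
          exact ⟨i, h⟩
        | cast i' =>
          rw [extend_cs_succ]
          exact (hf i j).2 h i' (by simpa using hi')

theorem extend_row_card {n k : ℕ} {f : Fin n → Fin k → Option Bool} (hf : IsAltTableau f)
    (i : Fin n) :
    (Finset.univ.filter fun j => extendBorder f i.castSucc j = some false).card = 1 := by
  rw [Finset.card_eq_one]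
  by_cases h : ∀ j', f i j' ≠ some false
  · refine ⟨0, ?_⟩
    rw [Finset.eq_singleton_iff_unique_mem]
    refine ⟨by simp [h], ?_⟩
    intro j hj
    simp only [Finset.mem_filter, Finset.mem_univ, true_and] at hj
    induction j using Fin.cases with
    | zero => rfl
    | succ j => rw [extend_cs_succ] at hj; exact absurd hj (h j)
  · push_neg at h
    obtain ⟨j0, hj0⟩ := h
    refine ⟨j0.succ, ?_⟩
    rw [Finset.eq_singleton_iff_unique_mem]
    constructor
    · simp [hj0]
    · intro j hj
      simp only [Finset.mem_filter, Finset.mem_univ, true_and] at hj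
      induction j using Fin.cases with
      | zero =>
        rw [extend_cs_zero, if_neg (by push_neg; exact ⟨j0, hj0⟩)] at hj
        exact absurd hj (by simp)
      | succ j =>
        rw [extend_cs_succ] at hj
        exact congrArg Fin.succ (row_unique hf hj hj0)

theorem extend_col_card {n k : ℕ} {f : Fin n → Fin k → Option Bool} (hf : IsAltTableau f)
    (j : Fin k) :
    (Finset.univ.filter fun i => extendBorder f i j.succ = some true).card = 1 := by
  rw [Finset.card_eq_one]
  by_cases h : ∀ i', f i' j ≠ some true
  · refine ⟨Fin.last n, ?_⟩
    rw [Finset.eq_singleton_iff_unique_mem]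
    refine ⟨by simp [h], ?_⟩
    intro i hi
    simp only [Finset.mem_filter, Finset.mem_univ, true_and] at hi
    induction i using Fin.lastCases with
    | last => rfl
    | cast i => rw [extend_cs_succ] at hi; exact absurd hi (h i)
  · push_neg at h
    obtain ⟨i0, hi0⟩ := h
    refine ⟨i0.castSucc, ?_⟩
    rw [Finset.eq_singleton_iff_unique_mem]
    constructor
    · simp [hi0]
    · intro i hi
      simp only [Finset.mem_filter, Finset.mem_univ, true_and] at hi
      induction i using Fin.lastCases with
      | last =>
        rw [extend_last_succ, if_neg (by push_neg; exact ⟨i0, hi0⟩)] at hi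
        exact absurd hi (by simp)
      | cast i =>
        rw [extend_cs_succ] at hi
        exact congrArg Fin.castSucc (col_unique hf hi hi0)

theorem extend_packed {n k : ℕ} {f : Fin n → Fin k → Option Bool} (hf : IsAltTableau f) :
    IsPackedAltTableau (extendBorder f) := by
  refine ⟨extend_alt hf, ?_, ?_, ?_, ?_⟩
  · intro i hi
    have hi' : i = Fin.castSucc ⟨(i : ℕ), hi⟩ := by ext; simp
    rw [hi']
    exact extend_row_card hf _
  · intro j hj
    have hne : j ≠ 0 := by rintro rfl; simp at hj
    obtain ⟨j', rfl⟩ := Fin.eq_succ_of_ne_zero hne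
    exact extend_col_card hf j'
  · intro j
    induction j using Fin.cases with
    | zero => simp
    | succ j => rw [extend_last_succ]; split <;> simp
  · intro i
    induction i using Fin.lastCases with
    | last => simp
    | cast i => rw [extend_cs_zero]; split <;> simp
theorem extend_delete {n k : ℕ} {g : Fin (n + 1) → Fin (k + 1) → Option Bool}
    (hg : IsPackedAltTableau g) : extendBorder (deleteBorder g) = g := by
  obtain ⟨halt, hrow, hcol, hbot, hleft⟩ := hg
  funext i j
  induction i using Fin.lastCases with
  | last =>
    induction j using Fin.cases with
    | zero =>
      rw [extend_last_zero]
      cases hv : g (Fin.last n) 0 with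
      | none => rfl
      | some b =>
        cases b
        · exact absurd hv (hbot 0)
        · exact absurd hv (hleft _)
    | succ j =>
      rw [extend_last_succ]
      by_cases h : ∀ i', deleteBorder g i' j ≠ some true
      · rw [if_pos h]
        have hc := hcol j.succ (by simp)
        rw [Finset.card_eq_one] at hc
        obtain ⟨i0, hi0⟩ := hc
        have hmem : i0 ∈ Finset.univ.filter fun i => g i j.succ = some true := by
          rw [hi0]; exact Finset.mem_singleton_self _
        simp only [Finset.mem_filter, Finset.mem_univ, true_and] at hmem
        induction i0 using Fin.lastCases with
        | last => exact hmem.symm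
        | cast i0 => exact absurd hmem (h i0)
      · rw [if_neg h]
        push_neg at h
        obtain ⟨i0, hi0⟩ := h
        exact ((halt i0.castSucc j.succ).2 hi0 (Fin.last n) (Fin.castSucc_lt_last i0)).symm
  | cast i =>
    induction j using Fin.cases with
    | zero =>
      rw [extend_cs_zero]
      by_cases h : ∀ j', deleteBorder g i j' ≠ some false
      · rw [if_pos h]
        have hr := hrow i.castSucc (by simpa using i.isLt)
        rw [Finset.card_eq_one] at hr
        obtain ⟨j0, hj0⟩ := hr
        have hmem : j0 ∈ Finset.univ.filter fun j => g i.castSucc j = some false := by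
          rw [hj0]; exact Finset.mem_singleton_self _
        simp only [Finset.mem_filter, Finset.mem_univ, true_and] at hmem
        induction j0 using Fin.cases with
        | zero => exact hmem.symm
        | succ j0 => exact absurd hmem (h j0)
      · rw [if_neg h]
        push_neg at h
        obtain ⟨j0, hj0⟩ := h
        exact ((halt i.castSucc j0.succ).1 hj0 0 (Fin.succ_pos j0)).symm
    | succ j =>
      rw [extend_cs_succ]
      rfl

theorem packed_delete_bijective (n k : ℕ) :
    ∃ hmap : ∀ g : {g : Fin (n + 1) → Fin (k + 1) → Option Bool // IsPackedAltTableau g},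
        IsAltTableau (deleteBorder g.1),
      Function.Bijective
        (fun g : {g : Fin (n + 1) → Fin (k + 1) → Option Bool // IsPackedAltTableau g} =>
          (⟨deleteBorder g.1, hmap g⟩ :
            {f : Fin n → Fin k → Option Bool // IsAltTableau f})) := by
  refine ⟨fun g => delete_alt g.2.1, ?_⟩
  rw [Function.bijective_iff_has_inverse]
  refine ⟨fun f => ⟨extendBorder f.1, extend_packed f.2⟩, ?_, ?_⟩
  · intro g
    exact Subtype.ext (extend_delete g.2)
  · intro f
    apply Subtype.ext
    funext i j
    simp [deleteBorder]
end

section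
/- For all non-negative integers n and k, the number of permutations of {1,...,n+k+1} with excedance set exactly {1,...,n} equals the number of permutations of {1,...,n+k+1} with excedance set exactly {1,...,k}. -/
open Polynomial Finset

section ExcedanceDuality

open Equiv


noncomputable def N' (m : ℕ) (W : ℕ → Bool) : ℕ :=
  Nat.card {σ : Equiv.Perm (Fin m) // ∀ i : Fin m, σ i > i ↔ W i.val = true}

lemma N'_congr (m : ℕ) (W W' : ℕ → Bool) (h : ∀ j, j < m → W j = W' j) :
    N' m W = N' m W' := by
  apply Nat.card_congr
  exact Equiv.subtypeEquivRight (fun σ => by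
    constructor <;> intro hh i <;> rw [hh i] <;> rw [h i.val i.isLt])

lemma card_split {α : Type*} [Finite α] (P Q : α → Prop) :
    Nat.card {x // P x} = Nat.card {x // P x ∧ Q x} + Nat.card {x // P x ∧ ¬ Q x} := by
  classical
  rw [← Nat.card_sum]
  apply Nat.card_congr
  exact ((Equiv.sumCompl (fun x : {x // P x} => Q x.val)).symm.trans
    (Equiv.sumCongr (Equiv.subtypeSubtypeEquivSubtypeInter P Q)
      (Equiv.subtypeSubtypeEquivSubtypeInter P (fun x => ¬ Q x))))

lemma val_succAbove {n : ℕ} (p : Fin (n+1)) (i : Fin n) :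
    (p.succAbove i).val = if i.val < p.val then i.val else i.val + 1 := by
  rw [Fin.succAbove]
  split
  · next h => simp [Fin.lt_def] at h; simp [h]
  · next h => simp [Fin.lt_def] at h; simp [Nat.not_lt.mpr h, Fin.val_succ]

lemma optionCongr_removeNone {α : Type*} (f : Equiv.Perm (Option α)) (h : f none = none) :
    Equiv.optionCongr (Equiv.removeNone f) = f := by
  apply Equiv.ext
  intro x
  cases x with
  | none => simp [h]
  | some j =>
    have hne : f (some j) ≠ none := by
      intro hc
      have := f.injective (hc.trans h.symm)
      simp at this
    obtain ⟨y, hy⟩ := Option.ne_none_iff_exists'.mp hne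
    have h2 := Equiv.removeNone_some f ⟨y, hy⟩
    simp only [Equiv.optionCongr_apply, Option.map_some]
    exact h2

/-- deleting a fixed point -/
lemma card_del (n : ℕ) (a : Fin (n+1)) (W : ℕ → Bool) (hWa : W a.val = false) :
    Nat.card {σ : Equiv.Perm (Fin (n+1)) //
        (∀ i : Fin (n+1), σ i > i ↔ W i.val = true) ∧ σ a = a}
      = N' n (fun j => if j < a.val then W j else W (j+1)) := by
  apply Nat.card_congr
  set E := finSuccEquiv' a with hE
  have hEnone : ∀ (σ : Equiv.Perm (Fin (n+1))), σ a = a → (E.permCongr σ) none = none := by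
    intro σ hfix
    rw [Equiv.permCongr_apply]
    simp [hE, finSuccEquiv'_symm_none, hfix, finSuccEquiv'_at]
  have key1 : ∀ (σ : Equiv.Perm (Fin (n+1))), σ a = a → ∀ j : Fin n,
      σ (a.succAbove j) = a.succAbove (Equiv.removeNone (E.permCongr σ) j) := by
    intro σ hfix j
    have hne : σ (a.succAbove j) ≠ a := by
      intro h
      exact Fin.succAbove_ne a j (σ.injective (h.trans hfix.symm))
    obtain ⟨y, hy⟩ := Fin.exists_succAbove_eq hne
    have h1 : (E.permCongr σ) (some j) = some y := by
      have : E (a.succAbove j) = some j := finSuccEquiv'_succAbove a j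
      rw [Equiv.permCongr_apply, ← this, Equiv.symm_apply_apply, ← hy,
        finSuccEquiv'_succAbove]
    have h2 : some (Equiv.removeNone (E.permCongr σ) j) = (E.permCongr σ) (some j) :=
      Equiv.removeNone_some _ ⟨y, h1⟩
    rw [h1] at h2
    rw [← hy]
    congr 1
    exact (Option.some_injective _ h2.symm)
  have keyW : ∀ j : Fin n, W (a.succAbove j).val =
      if j.val < a.val then W j.val else W (j.val+1) := by
    intro j
    rw [val_succAbove]
    rcases Nat.lt_or_ge j.val a.val with h | h
    · simp [h]
    · simp [Nat.not_lt.mpr h]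
  refine ⟨fun σ => ⟨Equiv.removeNone (E.permCongr σ.1), ?_⟩,
    fun τ => ⟨E.permCongr.symm (Equiv.optionCongr τ.1), ?_, ?_⟩, ?_, ?_⟩
  · -- condition on τ
    obtain ⟨σ, hσ, hfix⟩ := σ
    intro j
    dsimp only
    rw [← keyW j, gt_iff_lt, ← Fin.succAbove_lt_succAbove_iff (p := a),
      ← key1 σ hfix j]
    exact hσ (a.succAbove j)
  · -- excedance condition on reconstructed σ
    obtain ⟨τ, hτ⟩ := τ
    intro i
    dsimp only
    by_cases hia : i = a
    · subst hia
      have : E.permCongr.symm (Equiv.optionCongr τ) i = i := by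
        rw [Equiv.permCongr_symm_apply]
        simp [hE, finSuccEquiv'_at, finSuccEquiv'_symm_none]
      rw [this]
      simp [hWa, lt_irrefl]
    · obtain ⟨j, hj⟩ := Fin.exists_succAbove_eq hia
      have happ : E.permCongr.symm (Equiv.optionCongr τ) i = a.succAbove (τ j) := by
        rw [Equiv.permCongr_symm_apply, ← hj]
        simp [hE, finSuccEquiv'_succAbove, finSuccEquiv'_symm_some]
      rw [happ, ← hj, gt_iff_lt, Fin.succAbove_lt_succAbove_iff, keyW j]
      have := hτ j
      rw [gt_iff_lt] at this
      simpa using this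
  · -- fixed point of reconstructed σ
    obtain ⟨τ, hτ⟩ := τ
    dsimp only
    rw [Equiv.permCongr_symm_apply]
    simp [hE, finSuccEquiv'_at, finSuccEquiv'_symm_none]
  · -- left inverse
    intro σ
    apply Subtype.ext
    dsimp only
    rw [optionCongr_removeNone _ (hEnone σ.1 σ.2.2)]
    exact Equiv.symm_apply_apply _ _
  · -- right inverse
    intro τ
    apply Subtype.ext
    dsimp only
    rw [Equiv.apply_symm_apply, Equiv.removeNone_optionCongr]

lemma card_mulRight {m : ℕ} (c : Equiv.Perm (Fin m)) (hc : c * c = 1)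
    (P Q : Equiv.Perm (Fin m) → Prop) (h : ∀ σ, P σ ↔ Q (σ * c)) :
    Nat.card {σ // P σ} = Nat.card {σ // Q σ} := by
  apply Nat.card_congr
  refine ⟨fun σ => ⟨σ.1 * c, (h σ.1).mp σ.2⟩, fun ρ => ⟨ρ.1 * c, ?_⟩, ?_, ?_⟩
  · have := (h (ρ.1 * c)).mpr
    apply this
    rw [mul_assoc, hc, mul_one]
    exact ρ.2
  · intro σ; apply Subtype.ext; simp [mul_assoc, hc]
  · intro ρ; apply Subtype.ext; simp [mul_assoc, hc]

lemma swap_rel (M p : ℕ) (hp : p + 1 ≤ M) (W : ℕ → Bool) (ht : W p = true)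
    (hf : W (p+1) = false) :
    N' (M+1) W = N' (M+1) (fun j => if j = p then false else if j = p+1 then true else W j)
      + N' M (fun j => if j ≤ p then W j else W (j+1))
      + N' M (fun j => if j < p then W j else if j = p then false else W (j+1)) := by
  classical
  set a : Fin (M+1) := ⟨p+1, by omega⟩ with ha
  set b : Fin (M+1) := ⟨p, by omega⟩ with hb
  have hav : (a : ℕ) = p + 1 := rfl
  have hbv : (b : ℕ) = p := rfl
  have hba : b ≠ a := by simp [Fin.ext_iff, hav, hbv]
  set c := Equiv.swap b a with hc
  have hcc : c * c = 1 := Equiv.swap_mul_self b a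
  have cb : c b = a := Equiv.swap_apply_left b a
  have ca : c a = b := Equiv.swap_apply_right b a
  have cother : ∀ x, x ≠ b → x ≠ a → c x = x := fun x h1 h2 =>
    Equiv.swap_apply_of_ne_of_ne h1 h2
  have vne : ∀ {x y : Fin (M+1)}, x ≠ y → (x : ℕ) ≠ (y : ℕ) :=
    fun h hh => h (Fin.val_injective hh)
  set W₂ : ℕ → Bool := fun j => if j = p then false else W j with hW₂
  set Ws : ℕ → Bool := fun j => if j = p then false else if j = p+1 then true else W j with hWs
  -- step 1 : split off σ a = a
  have step1 := card_split (fun σ : Equiv.Perm (Fin (M+1)) =>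
      ∀ i : Fin (M+1), σ i > i ↔ W i.val = true) (fun σ => σ a = a)
  -- fixed-point part
  have efix : Nat.card {σ : Equiv.Perm (Fin (M+1)) //
      (∀ i : Fin (M+1), σ i > i ↔ W i.val = true) ∧ σ a = a}
      = N' M (fun j => if j ≤ p then W j else W (j+1)) := by
    rw [card_del M a W (by rw [hav]; exact hf)]
    apply N'_congr
    intro j hj
    rw [hav]
    by_cases h : j ≤ p
    · simp [h, Nat.lt_succ_of_le h]
    · have : ¬ j < p + 1 := by omega
      simp [h, this]
  -- split the non-fixed part by σ b = a
  have step2 := card_split (fun σ : Equiv.Perm (Fin (M+1)) =>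
      (∀ i : Fin (M+1), σ i > i ↔ W i.val = true) ∧ ¬ σ a = a) (fun σ => σ b = a)
  -- part with σ b = a : drop the redundant ¬ σ a = a
  have drop1 : Nat.card {σ : Equiv.Perm (Fin (M+1)) //
      ((∀ i : Fin (M+1), σ i > i ↔ W i.val = true) ∧ ¬ σ a = a) ∧ σ b = a}
      = Nat.card {σ : Equiv.Perm (Fin (M+1)) //
      (∀ i : Fin (M+1), σ i > i ↔ W i.val = true) ∧ σ b = a} := by
    apply Nat.card_congr
    apply Equiv.subtypeEquivRight
    intro σ
    constructor
    · rintro ⟨⟨h1, _⟩, h3⟩; exact ⟨h1, h3⟩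
    · rintro ⟨h1, h3⟩
      refine ⟨⟨h1, fun hfix => hba (σ.injective (h3.trans hfix.symm))⟩, h3⟩
  -- part with σ b = a, via multiplication by swap
  have e2 : Nat.card {σ : Equiv.Perm (Fin (M+1)) //
      (∀ i : Fin (M+1), σ i > i ↔ W i.val = true) ∧ σ b = a}
      = N' M (fun j => if j < p then W j else if j = p then false else W (j+1)) := by
    have hmul : ∀ σ : Equiv.Perm (Fin (M+1)),
        ((∀ i : Fin (M+1), σ i > i ↔ W i.val = true) ∧ σ b = a) ↔
        ((∀ i : Fin (M+1), (σ * c) i > i ↔ W₂ i.val = true) ∧ (σ * c) a = a) := by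
      intro σ
      constructor
      · rintro ⟨hC, hQb⟩
        have hσa : (σ a : ℕ) < p + 1 := by
          have h2 : ¬ (σ a > a) := by rw [hC a, hav, hf]; simp
          have h3 : (σ a : ℕ) ≠ p + 1 := by
            have : σ a ≠ a := fun h => hba (σ.injective (hQb.trans h.symm))
            have := vne this
            rwa [hav] at this
          rw [gt_iff_lt, Fin.lt_def, hav, Nat.not_lt] at h2
          omega
        constructor
        · intro i
          rcases eq_or_ne i a with rfl | hia
          · rw [Equiv.Perm.mul_apply, ca, hQb]
            simp [hW₂, hav, hf, lt_irrefl]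
          rcases eq_or_ne i b with rfl | hib
          · rw [Equiv.Perm.mul_apply, cb]
            have : ¬ (σ a > b) := by
              rw [gt_iff_lt, Fin.lt_def, hbv, Nat.not_lt]; omega
            simp [this, hW₂, hbv]
          · rw [Equiv.Perm.mul_apply, cother i hib hia, hC i, hW₂]
            have : (i : ℕ) ≠ p := by have := vne hib; rwa [hbv] at this
            simp [this]
        · rw [Equiv.Perm.mul_apply, ca, hQb]
      · rintro ⟨hC, hQa⟩
        have hσb : σ b = a := by
          have := hQa; rwa [Equiv.Perm.mul_apply, ca] at this
        have hρb : ((σ * c) b : ℕ) < p + 1 := by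
          have h2 : ¬ ((σ * c) b > b) := by
            rw [hC b, hbv, hW₂]; simp
          rw [gt_iff_lt, Fin.lt_def, hbv, Nat.not_lt] at h2
          omega
        refine ⟨?_, hσb⟩
        intro i
        rcases eq_or_ne i a with rfl | hia
        · have hsa : σ a = (σ * c) b := by rw [Equiv.Perm.mul_apply, cb]
          have hnot : ¬ (σ a > a) := by
            rw [gt_iff_lt, Fin.lt_def, hav, Nat.not_lt, hsa]; omega
          simp [hnot, hav, hf]
        rcases eq_or_ne i b with rfl | hib
        · have : σ b > b := by rw [hσb, gt_iff_lt, Fin.lt_def, hav, hbv]; omega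
          simp [this, hbv, ht]
        · have : σ i = (σ * c) i := by rw [Equiv.Perm.mul_apply, cother i hib hia]
          rw [this, hC i, hW₂]
          have hnp : (i : ℕ) ≠ p := by have := vne hib; rwa [hbv] at this
          simp [hnp]
    rw [card_mulRight c hcc _
      (fun ρ => (∀ i : Fin (M+1), ρ i > i ↔ W₂ i.val = true) ∧ ρ a = a) hmul,
      card_del M a W₂ (by rw [hav, hW₂]; simp [hf])]
    apply N'_congr
    intro j hj
    rw [hav, hW₂]
    by_cases h1 : j < p
    · simp [h1, Nat.ne_of_lt h1, (show j < p + 1 by omega)]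
    · by_cases h2 : j = p
      · simp [h2]
      · have h3 : ¬ j < p + 1 := by omega
        have h4 : j + 1 ≠ p := by omega
        simp [h1, h2, h3, h4]
  -- the remaining part via multiplication by swap
  have e3 : Nat.card {σ : Equiv.Perm (Fin (M+1)) //
      ((∀ i : Fin (M+1), σ i > i ↔ W i.val = true) ∧ ¬ σ a = a) ∧ ¬ σ b = a}
      = N' (M+1) Ws := by
    have hmul : ∀ σ : Equiv.Perm (Fin (M+1)),
        (((∀ i : Fin (M+1), σ i > i ↔ W i.val = true) ∧ ¬ σ a = a) ∧ ¬ σ b = a) ↔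
        (∀ i : Fin (M+1), (σ * c) i > i ↔ Ws i.val = true) := by
      intro σ
      constructor
      · rintro ⟨⟨hC, hQa⟩, hQb⟩
        have hQa' : (σ a : ℕ) ≠ p + 1 := by
          have := vne (show σ a ≠ a from hQa); rwa [hav] at this
        have hQb' : (σ b : ℕ) ≠ p + 1 := by
          have := vne (show σ b ≠ a from hQb); rwa [hav] at this
        have hσa : (σ a : ℕ) < p + 1 := by
          have h2 : ¬ (σ a > a) := by rw [hC a, hav, hf]; simp
          rw [gt_iff_lt, Fin.lt_def, hav, Nat.not_lt] at h2
          omega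
        have hσb : p + 1 < (σ b : ℕ) := by
          have h2 : σ b > b := by rw [hC b, hbv]; exact ht
          rw [gt_iff_lt, Fin.lt_def, hbv] at h2
          omega
        intro i
        rcases eq_or_ne i a with rfl | hia
        · rw [Equiv.Perm.mul_apply, ca]
          have : a < σ b := by rw [Fin.lt_def, hav]; omega
          simp [this, hWs, hav]
        rcases eq_or_ne i b with rfl | hib
        · rw [Equiv.Perm.mul_apply, cb]
          have : ¬ (b < σ a) := by rw [Fin.lt_def, hbv, Nat.not_lt]; omega
          simp [this, hWs, hbv]
        · rw [Equiv.Perm.mul_apply, cother i hib hia, hC i, hWs]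
          have h1 : (i : ℕ) ≠ p := by have := vne hib; rwa [hbv] at this
          have h2 : (i : ℕ) ≠ p + 1 := by have := vne hia; rwa [hav] at this
          simp [h1, h2]
      · intro hC
        have hρa : p + 1 < ((σ * c) a : ℕ) := by
          have h2 : (σ * c) a > a := by rw [hC a, hav, hWs]; simp
          rw [gt_iff_lt, Fin.lt_def, hav] at h2
          omega
        have hρb : ((σ * c) b : ℕ) < p + 1 := by
          have h2 : ¬ ((σ * c) b > b) := by rw [hC b, hbv, hWs]; simp
          rw [gt_iff_lt, Fin.lt_def, hbv, Nat.not_lt] at h2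
          omega
        have hsb : σ b = (σ * c) a := by rw [Equiv.Perm.mul_apply, ca]
        have hsa : σ a = (σ * c) b := by rw [Equiv.Perm.mul_apply, cb]
        refine ⟨⟨?_, ?_⟩, ?_⟩
        · intro i
          rcases eq_or_ne i a with rfl | hia
          · have h2 : ¬ (σ a > a) := by
              rw [gt_iff_lt, Fin.lt_def, hav, Nat.not_lt, hsa]; omega
            simp [h2, hav, hf]
          rcases eq_or_ne i b with rfl | hib
          · have h2 : σ b > b := by
              rw [gt_iff_lt, Fin.lt_def, hbv, hsb]; omega
            simp [h2, hbv, ht]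
          · have : σ i = (σ * c) i := by rw [Equiv.Perm.mul_apply, cother i hib hia]
            rw [this, hC i, hWs]
            have h1 : (i : ℕ) ≠ p := by have := vne hib; rwa [hbv] at this
            have h2 : (i : ℕ) ≠ p + 1 := by have := vne hia; rwa [hav] at this
            simp [h1, h2]
        · intro hfix
          have : (σ a : ℕ) = p + 1 := by rw [hfix, hav]
          rw [hsa] at this
          omega
        · intro hba'
          have : (σ b : ℕ) = p + 1 := by rw [hba', hav]
          rw [hsb] at this
          omega
    exact card_mulRight c hcc _ _ hmul
  -- assemble
  show Nat.card {σ : Equiv.Perm (Fin (M+1)) //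
      ∀ i : Fin (M+1), σ i > i ↔ W i.val = true} = _
  rw [step1, step2, efix, drop1, e2, e3]
  omega

noncomputable def NN (w : List Bool) : ℕ := N' (w.length + 1) (fun j => w.getD j false)

def rc (w : List Bool) : List Bool := (w.map not).reverse

def invc : List Bool → ℕ
  | [] => 0
  | true :: w => w.count false + invc w
  | false :: w => invc w

lemma getD_split (u l : List Bool) (j : ℕ) :
    (u ++ l).getD j false = if j < u.length then u.getD j false
      else l.getD (j - u.length) false := by
  split
  · next h => exact List.getD_append _ _ _ _ h
  · next h => exact List.getD_append_right _ _ _ _ (by omega)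

lemma NN_swap (u v : List Bool) :
    NN (u ++ true :: false :: v)
      = NN (u ++ false :: true :: v) + NN (u ++ true :: v) + NN (u ++ false :: v) := by
  have hlen1 : (u ++ true :: false :: v).length + 1 = (u.length + v.length + 2) + 1 := by
    simp; omega
  have hlen2 : (u ++ false :: true :: v).length + 1 = (u.length + v.length + 2) + 1 := by
    simp; omega
  have hlen3 : (u ++ true :: v).length + 1 = u.length + v.length + 2 := by simp; omega
  have hlen4 : (u ++ false :: v).length + 1 = u.length + v.length + 2 := by simp; omega
  have ht : (fun j => (u ++ true :: false :: v).getD j false) u.length = true := by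
    simp only [getD_split]
    rw [if_neg (show ¬ u.length < u.length by omega),
      show u.length - u.length = 0 by omega]
    rfl
  have hf : (fun j => (u ++ true :: false :: v).getD j false) (u.length + 1) = false := by
    simp only [getD_split]
    rw [if_neg (show ¬ u.length + 1 < u.length by omega),
      show u.length + 1 - u.length = 1 by omega]
    rfl
  have main := swap_rel (u.length + v.length + 2) u.length (by omega)
    (fun j => (u ++ true :: false :: v).getD j false) ht hf
  rw [NN, hlen1, main, NN, hlen2, NN, hlen3, NN, hlen4]
  congr 1
  · congr 1
    · apply N'_congr
      intro j hj
      simp only [getD_split]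
      by_cases h1 : j < u.length
      · simp [h1, Nat.ne_of_lt h1, (show j ≠ u.length + 1 by omega)]
      by_cases h2 : j = u.length
      · subst h2
        simp [(show ¬ u.length < u.length from lt_irrefl _),
          (show u.length - u.length = 0 by omega)]
      by_cases h3 : j = u.length + 1
      · subst h3
        simp [h2, (show ¬ u.length + 1 < u.length by omega),
          (show u.length + 1 - u.length = 1 by omega)]
      · obtain ⟨t, h5⟩ : ∃ t, j - u.length = t + 2 := ⟨j - u.length - 2, by omega⟩
        simp only [if_neg h1, if_neg h2, if_neg h3]
        simp only [h5, List.getD_cons_succ]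
    · apply N'_congr
      intro j hj
      simp only [getD_split]
      by_cases h1 : j < u.length
      · simp [h1, (show j ≤ u.length by omega)]
      by_cases h2 : j = u.length
      · subst h2
        simp [(show ¬ u.length < u.length from lt_irrefl _),
          (show u.length - u.length = 0 by omega), le_refl]
      · have h4 : ¬ j ≤ u.length := by omega
        have h5 : ¬ j + 1 < u.length := by omega
        obtain ⟨t, h6, h8⟩ : ∃ t, j + 1 - u.length = t + 2 ∧ j - u.length = t + 1 :=
          ⟨j - u.length - 1, by omega, by omega⟩
        simp only [if_neg h4, if_neg h5, if_neg h1]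
        simp only [h6, h8, List.getD_cons_succ]
  · apply N'_congr
    intro j hj
    simp only [getD_split]
    by_cases h1 : j < u.length
    · simp [h1]
    by_cases h2 : j = u.length
    · subst h2
      simp [(show ¬ u.length < u.length from lt_irrefl _),
        (show u.length - u.length = 0 by omega), lt_irrefl]
    · have h5 : ¬ j + 1 < u.length := by omega
      obtain ⟨t, h6, h8⟩ : ∃ t, j + 1 - u.length = t + 2 ∧ j - u.length = t + 1 :=
        ⟨j - u.length - 1, by omega, by omega⟩
      simp only [if_neg h1, if_neg h2, if_neg h5]
      simp only [h6, h8, List.getD_cons_succ]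

lemma getD_replicate_false (t m : ℕ) : (List.replicate m false).getD t false = false := by
  by_cases h : t < m
  · simp [List.getD_eq_getElem?_getD, List.getElem?_replicate, h]
  · rw [List.getD_eq_default]
    simp
    omega

lemma getD_replicate_true_iff (q j : ℕ) :
    ((List.replicate q true).getD j false = true) ↔ j < q := by
  by_cases hj : j < q
  · simp [List.getD_eq_getElem?_getD, List.getElem?_replicate, hj]
  · rw [List.getD_eq_default _ _ (by simp; omega)]
    simp
    omega

lemma NN_false_cons (w : List Bool) : NN (false :: w) = NN w := by
  have e1 : NN (false :: w) = Nat.card {σ : Equiv.Perm (Fin (w.length+1+1)) //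
      (∀ i : Fin (w.length+1+1), σ i > i ↔ (false :: w).getD i.val false = true)
        ∧ σ 0 = 0} := by
    rw [NN]
    apply Nat.card_congr
    apply Equiv.subtypeEquivRight
    intro σ
    constructor
    · intro h
      refine ⟨h, ?_⟩
      have h0 := h 0
      simp at h0
      exact h0
    · rintro ⟨h, _⟩
      exact h
  rw [e1, card_del (w.length+1) 0 (fun j => (false :: w).getD j false) rfl]
  apply N'_congr
  intro j hj
  simp

lemma NN_replicate_true (q : ℕ) : NN (List.replicate q true) = 1 := by
  rw [NN]
  have hl : (List.replicate q true).length + 1 = q + 1 := by simp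
  rw [hl]
  have forced : ∀ σ : Equiv.Perm (Fin (q+1)),
      (∀ i : Fin (q+1), σ i > i ↔ (List.replicate q true).getD i.val false = true) →
      σ = finRotate (q+1) := by
    intro σ h
    have hW : ∀ i : Fin (q+1), σ i > i ↔ (i : ℕ) < q := by
      intro i
      rw [h i, getD_replicate_true_iff]
    have A : ∀ d, ∀ i : Fin (q+1), (i : ℕ) < q → q - (i : ℕ) ≤ d + 1 →
        ((σ i : ℕ)) = (i : ℕ) + 1 := by
      intro d
      induction d with
      | zero =>
        intro i hi hle
        have h1 := (hW i).mpr hi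
        rw [gt_iff_lt, Fin.lt_def] at h1
        have h2 : (σ i : ℕ) ≤ q := Nat.lt_succ_iff.mp (σ i).isLt
        omega
      | succ d ih =>
        intro i hi hle
        have h1 := (hW i).mpr hi
        rw [gt_iff_lt, Fin.lt_def] at h1
        have h2 : (σ i : ℕ) ≤ q := Nat.lt_succ_iff.mp (σ i).isLt
        by_contra hne
        have h3 : (i : ℕ) + 2 ≤ (σ i : ℕ) := by omega
        have hy' : (σ i : ℕ) - 1 < q + 1 := by omega
        set y : Fin (q+1) := ⟨(σ i : ℕ) - 1, hy'⟩ with hy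
        have hy1 : (y : ℕ) < q := by rw [hy]; simp; omega
        have hy2 : q - (y : ℕ) ≤ d + 1 := by rw [hy]; simp; omega
        have h4 := ih y hy1 hy2
        have h5 : σ y = σ i := by
          apply Fin.val_injective
          rw [h4, hy]
          simp
          omega
        have h6 := σ.injective h5
        have h7 : (y : ℕ) = (i : ℕ) := by rw [h6]
        rw [hy] at h7
        simp at h7
        omega
    have hlast : ((σ (Fin.last q) : ℕ)) = 0 := by
      by_contra h0
      have h2 : (σ (Fin.last q) : ℕ) ≤ q := Nat.lt_succ_iff.mp (σ (Fin.last q)).isLt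
      have hy' : (σ (Fin.last q) : ℕ) - 1 < q + 1 := by omega
      set y : Fin (q+1) := ⟨(σ (Fin.last q) : ℕ) - 1, hy'⟩ with hy
      have hy1 : (y : ℕ) < q := by rw [hy]; simp; omega
      have h4 := A q y hy1 (by omega)
      have h5 : σ y = σ (Fin.last q) := by
        apply Fin.val_injective
        rw [h4, hy]
        simp
        omega
      have h6 := σ.injective h5
      have h7 : (y : ℕ) = q := by rw [h6]; simp [Fin.last]
      rw [hy] at h7
      simp at h7
      omega
    apply Equiv.ext
    intro i
    rw [finRotate_succ_apply]
    apply Fin.val_injective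
    by_cases hi : (i : ℕ) < q
    · have hilast : i ≠ Fin.last q := by
        intro hh
        rw [hh] at hi
        simp [Fin.last] at hi
      rw [A q i hi (by omega), Fin.val_add_one, if_neg hilast]
    · have hieq : i = Fin.last q := by
        apply Fin.val_injective
        have := Nat.lt_succ_iff.mp i.isLt
        simp [Fin.last]
        omega
      rw [hieq, hlast, Fin.val_add_one, if_pos rfl]
  have hcond : ∀ i : Fin (q+1), finRotate (q+1) i > i ↔
      (List.replicate q true).getD i.val false = true := by
    intro i
    rw [getD_replicate_true_iff, finRotate_succ_apply, gt_iff_lt, Fin.lt_def,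
      Fin.val_add_one]
    by_cases hi : i = Fin.last q
    · rw [if_pos hi]
      subst hi
      simp [Fin.last]
    · rw [if_neg hi]
      have : (i : ℕ) ≠ q := by
        intro hh
        exact hi (Fin.val_injective (by simp [Fin.last, hh]))
      have := Nat.lt_succ_iff.mp i.isLt
      constructor <;> intro <;> omega
  apply Nat.card_eq_one_iff_unique.mpr
  constructor
  · constructor
    intro x y
    exact Subtype.ext ((forced x.1 x.2).trans (forced y.1 y.2).symm)
  · exact ⟨⟨finRotate (q+1), hcond⟩⟩

lemma NN_base (cF cT : ℕ) :
    NN (List.replicate cF false ++ List.replicate cT true) = 1 := by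
  induction cF with
  | zero => simpa using NN_replicate_true cT
  | succ c ih =>
    rw [List.replicate_succ, List.cons_append, NN_false_cons]
    exact ih

lemma shape : ∀ (w : List Bool), (¬ ∃ u v, w = u ++ true :: false :: v) →
    ∃ cF cT, w = List.replicate cF false ++ List.replicate cT true := by
  intro w
  induction w with
  | nil => exact fun _ => ⟨0, 0, rfl⟩
  | cons b w ih =>
    intro h
    have hw : ¬ ∃ u v, w = u ++ true :: false :: v := by
      rintro ⟨u, v, rfl⟩
      exact h ⟨b :: u, v, rfl⟩
    obtain ⟨cF, cT, hw'⟩ := ih hw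
    subst hw'
    cases b with
    | false => exact ⟨cF + 1, cT, by rw [List.replicate_succ, List.cons_append]⟩
    | true =>
      cases cF with
      | zero => exact ⟨0, cT + 1, by simp [List.replicate_succ]⟩
      | succ c =>
        exact absurd ⟨[], List.replicate c false ++ List.replicate cT true, by
          simp [List.replicate_succ]⟩ h

def invc' := invc

lemma invc_lt (u v : List Bool) :
    invc (u ++ false :: true :: v) < invc (u ++ true :: false :: v) := by
  induction u with
  | nil =>
    simp [invc, List.count_cons]
  | cons b u ih =>
    cases b with
    | false => simpa [invc] using ih
    | true =>
      have hc : (u ++ false :: true :: v).count false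
          = (u ++ true :: false :: v).count false := by
        simp [List.count_append, List.count_cons]
      simp only [invc, List.cons_append, List.append_eq]
      omega

lemma NN_rc (w : List Bool) : NN w = NN (rc w) := by
  suffices h : ∀ L, ∀ w : List Bool, w.length ≤ L → NN w = NN (rc w) from
    h w.length w le_rfl
  intro L
  induction L with
  | zero =>
    intro w hw
    have : w = [] := by
      cases w with
      | nil => rfl
      | cons a l => simp at hw
    subst this
    rfl
  | succ L ihL =>
    have base : ∀ w : List Bool, (¬ ∃ u v, w = u ++ true :: false :: v) →
        NN w = NN (rc w) := by
      intro w hp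
      obtain ⟨cF, cT, hw'⟩ := shape w hp
      subst hw'
      rw [NN_base]
      have hrc : rc (List.replicate cF false ++ List.replicate cT true)
          = List.replicate cT false ++ List.replicate cF true := by
        simp [rc]
      rw [hrc, NN_base]
    have H2 : ∀ I, ∀ w : List Bool, w.length ≤ L + 1 → invc w ≤ I →
        NN w = NN (rc w) := by
      intro I
      induction I with
      | zero =>
        intro w hw hI
        by_cases hp : ∃ u v, w = u ++ true :: false :: v
        · obtain ⟨u, v, rfl⟩ := hp
          have := invc_lt u v
          omega
        · exact base w hp
      | succ I ihI =>
        intro w hw hI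
        by_cases hp : ∃ u v, w = u ++ true :: false :: v
        · obtain ⟨u, v, rfl⟩ := hp
          have hrc1 : rc (u ++ true :: false :: v) = rc v ++ true :: false :: rc u := by
            simp [rc]
          have hrc2 : rc (u ++ false :: true :: v) = rc v ++ false :: true :: rc u := by
            simp [rc]
          have hrc3 : rc (u ++ true :: v) = rc v ++ false :: rc u := by
            simp [rc]
          have hrc4 : rc (u ++ false :: v) = rc v ++ true :: rc u := by
            simp [rc]
          have hlu : (u ++ true :: false :: v).length = u.length + v.length + 2 := by
            simp
            omega
          have e1 : NN (u ++ false :: true :: v) = NN (rc (u ++ false :: true :: v)) := by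
            apply ihI
            · simp at hw ⊢
              omega
            · have := invc_lt u v
              omega
          have e2 : NN (u ++ true :: v) = NN (rc (u ++ true :: v)) := by
            apply ihL
            simp at hw ⊢
            omega
          have e3 : NN (u ++ false :: v) = NN (rc (u ++ false :: v)) := by
            apply ihL
            simp at hw ⊢
            omega
          rw [NN_swap u v, hrc1, NN_swap (rc v) (rc u), e1, e2, e3, hrc2, hrc3, hrc4]
          omega
        · exact base w hp
    exact fun w hw => H2 (invc w) w hw le_rfl

lemma card_eq_NN (a b : ℕ) :
    Nat.card {σ : Equiv.Perm (Fin (a + b + 1)) // ∀ i, σ i > i ↔ (i : ℕ) < a}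
      = NN (List.replicate a true ++ List.replicate b false) := by
  rw [NN]
  have hl : (List.replicate a true ++ List.replicate b false).length + 1 = a + b + 1 := by
    simp
  rw [hl]
  apply Nat.card_congr
  apply Equiv.subtypeEquivRight
  intro σ
  have hgg : ∀ j : ℕ,
      (((List.replicate a true ++ List.replicate b false).getD j false) = true) ↔ j < a := by
    intro j
    rw [getD_split]
    simp only [List.length_replicate]
    by_cases hj : j < a
    · rw [if_pos hj, getD_replicate_true_iff]
    · rw [if_neg hj, getD_replicate_false]
      simp
      omega
  constructor <;> intro h i <;> rw [h i]
  · exact (hgg i.val).symm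
  · exact hgg i.val

end ExcedanceDuality

theorem excedance_duality (n k : ℕ) :
    Fintype.card {σ : Equiv.Perm (Fin (n + k + 1)) // ∀ i, σ i > i ↔ (i : ℕ) < n}
      = Fintype.card {σ : Equiv.Perm (Fin (n + k + 1)) // ∀ i, σ i > i ↔ (i : ℕ) < k} := by
  rw [← Nat.card_eq_fintype_card, ← Nat.card_eq_fintype_card]
  have key := NN_rc (List.replicate n true ++ List.replicate k false)
  have hrc : rc (List.replicate n true ++ List.replicate k false)
      = List.replicate k true ++ List.replicate n false := by
    simp [rc]
  rw [hrc] at key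
  have e2 := card_eq_NN k n
  rw [show k + n + 1 = n + k + 1 from by omega] at e2
  rw [card_eq_NN n k, e2]
  exact key
end
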